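/- Let a, b ∈ ℝ with a ≠ 0, β > 0, γ the Euler–Mascheroni constant, and let (ξ_n)_{n≥0} be i.i.d. standard normal. Define x_0 = 0, l_0 = 0, x_{n+1} = b/a + ξ_n/(2^{l_n}√2 a β) with l_{n+1} ∈ ℤ chosen so that 2^{l_{n+1}}|b - a x_{n+1}| ∈ (1/2, 1]. If 1 ≤ s < β e^{γ/2}, then s^n (x_n - b/a) → 0 almost surely. -/

import Mathlib

/-!
Write `u n = 2 ^ (-l n)`. The error of the next iterate is `x (n+1) - b/a = ξ n u n / (√2 a β)`,
and the choice of `l (n+1)` forces `u (n+1) ≤ (√2 |ξ n| / β) u n`; hence `s^n |x n - b/a|` is at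
most a constant times `∏_{i<n} s √2 |ξ i| / β`. By the strong law of large numbers the logarithm of
this product is `n (log s + log 2 / 2 - log β + 𝔼 log |ξ 0| + o(1))`, and
`𝔼 log |ξ 0| = -(γ + log 2) / 2` follows from `Γ'(1/2) = -√π (γ + 2 log 2)` by the substitution
`t = x² / 2`. So the exponent tends to `-∞` exactly when `s < β e^{γ/2}`.
Mathlib's `log x` equals `log |x|`, so `log (ξ i)` stands for `log |ξ i|`.
-/

open MeasureTheory ProbabilityTheory Filter Real Set Finset
open scoped Topology

lemma abs_log_le_rpow_neg_add_rpow (x : ℝ) {ε : ℝ} (hε : 0 < ε) :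
    |log x| ≤ (|x| ^ (-ε) + |x| ^ ε) / ε := by
  rw [← log_abs, add_div]
  rcases le_total |x| 1 with hx | hx
  · have hlog := log_le_rpow_div (inv_nonneg.2 (abs_nonneg x)) hε
    rw [log_inv, inv_rpow (abs_nonneg x), ← rpow_neg (abs_nonneg x)] at hlog
    rw [abs_of_nonpos (log_nonpos (abs_nonneg x) hx)]
    linarith [div_nonneg (rpow_nonneg (abs_nonneg x) ε) hε.le]
  · rw [abs_of_nonneg (log_nonneg hx)]
    linarith [log_le_rpow_div (abs_nonneg x) hε,
      div_nonneg (rpow_nonneg (abs_nonneg x) (-ε)) hε.le]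

lemma integrableOn_rpow_mul_log_mul_exp_neg_mul_rpow {s p b : ℝ} (hs : -1 < s) (hp : 0 < p)
    (hb : 0 < b) :
    IntegrableOn (fun t : ℝ => t ^ s * log t * exp (-b * t ^ p)) (Ioi 0) := by
  set ε := (s + 1) / 2 with hε_def
  have hε : 0 < ε := by rw [hε_def]; linarith
  have hdom := ((integrableOn_rpow_mul_exp_neg_mul_rpow (s := s - ε)
    (by rw [hε_def]; linarith) hp hb).add
    (integrableOn_rpow_mul_exp_neg_mul_rpow (s := s + ε) (by linarith) hp hb)).div_const ε
  refine hdom.mono' (by fun_prop) ?_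
  filter_upwards [ae_restrict_mem measurableSet_Ioi] with t (ht : 0 < t)
  have hts : 0 < t ^ s := rpow_pos_of_pos ht s
  calc ‖t ^ s * log t * exp (-b * t ^ p)‖ = t ^ s * |log t| * exp (-b * t ^ p) := by
        rw [norm_mul, norm_mul, norm_of_nonneg hts.le, norm_of_nonneg (exp_pos _).le,
          Real.norm_eq_abs]
    _ ≤ t ^ s * ((t ^ (-ε) + t ^ ε) / ε) * exp (-b * t ^ p) := by
        gcongr
        simpa [abs_of_pos ht] using abs_log_le_rpow_neg_add_rpow t hε
    _ = (t ^ (s - ε) * exp (-b * t ^ p) + t ^ (s + ε) * exp (-b * t ^ p)) / ε := by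
        rw [sub_eq_add_neg, rpow_add ht, rpow_add ht]
        ring

lemma hasDerivAt_Gamma_integral {s : ℝ} (hs : 0 < s) :
    HasDerivAt Gamma (∫ t in Ioi 0, t ^ (s - 1) * log t * exp (-t)) s := by
  have hre : 0 < (s : ℂ).re := hs
  have hGamma : Complex.Gamma =ᶠ[𝓝 (s : ℂ)] Complex.GammaIntegral := by
    filter_upwards [(isOpen_lt continuous_const Complex.continuous_re).mem_nhds hre] with z hz
    exact Complex.Gamma_eq_integral hz
  have hC := ((Complex.hasDerivAt_GammaIntegral hre).congr_of_eventuallyEq hGamma).real_of_complex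
  simp only [Complex.Gamma_ofReal, Complex.ofReal_re] at hC
  convert hC using 1
  rw [setIntegral_congr_fun measurableSet_Ioi
    (g := fun t => ((t ^ (s - 1) * log t * exp (-t) : ℝ) : ℂ)) fun t (ht : 0 < t) => ?_,
    integral_complex_ofReal, Complex.ofReal_re]
  simp only [Complex.ofReal_mul, Complex.ofReal_cpow ht.le, Complex.ofReal_sub,
    Complex.ofReal_one]
  ring

lemma integrable_comp_abs_of_integrableOn_Ioi {E : Type*} [NormedAddCommGroup E] {f : ℝ → E}
    (hf : IntegrableOn f (Ioi 0)) : Integrable fun x => f |x| := by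
  have hIoi : IntegrableOn (fun x => f |x|) (Ioi 0) :=
    hf.congr_fun (fun x (hx : 0 < x) => by rw [abs_of_pos hx]) measurableSet_Ioi
  have hIic : IntegrableOn (fun x => f |x|) (Iic 0) := by
    have hneg : MeasurableEmbedding fun x : ℝ => -x := (Homeomorph.neg ℝ).measurableEmbedding
    rw [← Measure.map_neg_eq_self (volume : Measure ℝ), hneg.integrableOn_map_iff]
    simp_rw [Function.comp_def, abs_neg, neg_preimage, neg_Iic, neg_zero]
    exact (integrableOn_Ici_iff_integrableOn_Ioi).mpr hIoi
  simpa using hIic.union hIoi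

lemma integral_log_mul_exp_neg_half_sq :
    ∫ t in Ioi 0, log t * exp (-(1 / 2) * t ^ 2)
      = -√(2 * π) * (eulerMascheroniConstant + log 2) / 4 := by
  have hsqrt2 : (0 : ℝ) < √2 := by positivity
  have hGamma := Real.Gamma_eq_integral one_half_pos
  have hGammaLog := (hasDerivAt_Gamma_integral one_half_pos).unique hasDerivAt_Gamma_one_half
  have hlog : IntegrableOn (fun u : ℝ => u ^ (1 / 2 - 1 : ℝ) * log u * exp (-u)) (Ioi 0) := by
    simpa using integrableOn_rpow_mul_log_mul_exp_neg_mul_rpow (s := 1 / 2 - 1) (p := 1) (b := 1)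
      (by norm_num) one_pos one_pos
  calc ∫ t in Ioi 0, log t * exp (-(1 / 2) * t ^ 2)
      = √2 * ∫ x in Ioi 0, log (√2 * x) * exp (-(1 / 2) * (√2 * x) ^ 2) := by
        rw [integral_comp_mul_left_Ioi (fun t => log t * exp (-(1 / 2) * t ^ 2)) 0 hsqrt2,
          mul_zero, smul_eq_mul, mul_inv_cancel_left₀ hsqrt2.ne']
    _ = √2 * ∫ u in Ioi 0, (|1 / 2| * u ^ (1 / 2 - 1 : ℝ)) •
          (log (√2 * u ^ (1 / 2 : ℝ)) * exp (-(1 / 2) * (√2 * u ^ (1 / 2 : ℝ)) ^ 2)) := by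
        rw [integral_comp_rpow_Ioi (fun x => log (√2 * x) * exp (-(1 / 2) * (√2 * x) ^ 2))
          one_half_pos.ne']
    _ = √2 * ∫ u in Ioi 0, 1 / 4 * (log 2 * (exp (-u) * u ^ (1 / 2 - 1 : ℝ)) +
          u ^ (1 / 2 - 1 : ℝ) * log u * exp (-u)) := by
        congr 1
        refine setIntegral_congr_fun measurableSet_Ioi fun u (hu : 0 < u) => ?_
        have hsq : (√2 * u ^ (1 / 2 : ℝ)) ^ 2 = 2 * u := by
          rw [mul_pow, sq_sqrt zero_le_two, ← rpow_natCast, ← rpow_mul hu.le]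
          norm_num
        rw [smul_eq_mul, hsq, log_mul hsqrt2.ne' (rpow_pos_of_pos hu _).ne', log_rpow hu,
          log_sqrt zero_le_two, abs_of_pos one_half_pos]
        ring_nf
    _ = -√(2 * π) * (eulerMascheroniConstant + log 2) / 4 := by
        rw [integral_const_mul, integral_add
          ((Real.GammaIntegral_convergent one_half_pos).const_mul _) hlog, integral_const_mul,
          ← hGamma, hGammaLog, Gamma_one_half_eq, sqrt_mul zero_le_two]
        ring

lemma gaussianPDFReal_zero_one_mul_log (x : ℝ) :
    gaussianPDFReal 0 1 x * log x = (√(2 * π))⁻¹ * (log |x| * exp (-(1 / 2) * |x| ^ 2)) := by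
  rw [gaussianPDFReal, log_abs, sq_abs]
  push_cast
  ring_nf

lemma integrableOn_log_mul_exp_neg_half_sq :
    IntegrableOn (fun t : ℝ => log t * exp (-(1 / 2) * t ^ 2)) (Ioi 0) := by
  simpa using integrableOn_rpow_mul_log_mul_exp_neg_mul_rpow (s := 0) (p := 2) (b := 1 / 2)
    (by norm_num) two_pos one_half_pos

lemma integrable_log_gaussianReal : Integrable log (gaussianReal 0 1) := by
  rw [gaussianReal_of_var_ne_zero 0 one_ne_zero, integrable_withDensity_iff_integrable_smul'
    (measurable_gaussianPDF 0 1) (ae_of_all _ fun _ => gaussianPDF_lt_top)]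
  simp_rw [gaussianPDF, ENNReal.toReal_ofReal (gaussianPDFReal_nonneg 0 1 _), smul_eq_mul,
    gaussianPDFReal_zero_one_mul_log]
  exact (integrable_comp_abs_of_integrableOn_Ioi integrableOn_log_mul_exp_neg_half_sq).const_mul _

lemma integral_log_gaussianReal :
    ∫ x, log x ∂gaussianReal 0 1 = -(eulerMascheroniConstant + log 2) / 2 := by
  simp_rw [integral_gaussianReal_eq_integral_smul one_ne_zero, smul_eq_mul,
    gaussianPDFReal_zero_one_mul_log]
  rw [integral_const_mul, integral_comp_abs (f := fun t => log t * exp (-(1 / 2) * t ^ 2)),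
    integral_log_mul_exp_neg_half_sq]
  field_simp
  ring

section Gaussian

variable {Ω : Type*} {mΩ : MeasurableSpace Ω} {P : Measure Ω}

lemma ae_ne_of_map_eq_gaussianReal {X : Ω → ℝ} {μ : ℝ} {v : NNReal} (hv : v ≠ 0)
    (hX : P.map X = gaussianReal μ v) (c : ℝ) : ∀ᵐ ω ∂P, X ω ≠ c := by
  have := nullSingletonClass_gaussianReal (μ := μ) hv
  have hXm : AEMeasurable X P := .of_map_ne_zero (hX ▸ IsProbabilityMeasure.ne_zero _)
  exact ae_of_ae_map hXm (by rw [hX]; exact Measure.ae_ne _ c)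

lemma ae_tendsto_average_log_of_iIndepFun_gaussianReal {ξ : ℕ → Ω → ℝ} (hindep : iIndepFun ξ P)
    (hgauss : ∀ n, P.map (ξ n) = gaussianReal 0 1) :
    ∀ᵐ ω ∂P, Tendsto (fun n : ℕ => (∑ i ∈ range n, log (ξ i ω)) / n) atTop
      (𝓝 (-(eulerMascheroniConstant + log 2) / 2)) := by
  have hξm : ∀ n, AEMeasurable (ξ n) P := fun n =>
    .of_map_ne_zero (hgauss n ▸ IsProbabilityMeasure.ne_zero _)
  have hint : Integrable (log ∘ ξ 0) P := by
    rw [← integrable_map_measure measurable_log.aestronglyMeasurable (hξm 0), hgauss 0]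
    exact integrable_log_gaussianReal
  have hmean : ∫ ω, log (ξ 0 ω) ∂P = -(eulerMascheroniConstant + log 2) / 2 := by
    rw [← integral_map (hξm 0) measurable_log.aestronglyMeasurable, hgauss 0,
      integral_log_gaussianReal]
  have hident : ∀ i, IdentDistrib (log ∘ ξ i) (log ∘ ξ 0) P P := fun i =>
    (IdentDistrib.mk (hξm i) (hξm 0) (by rw [hgauss i, hgauss 0])).comp measurable_log
  simpa only [Function.comp_apply, hmean] using strong_law_ae_real (fun i => log ∘ ξ i) hint
    (fun i j hij => (hindep.indepFun hij).comp measurable_log measurable_log) hident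

end Gaussian

lemma le_mul_prod_range_of_succ_le {u r : ℕ → ℝ} (hr : ∀ n, 0 ≤ r n)
    (h : ∀ n, u (n + 1) ≤ r n * u n) (n : ℕ) : u n ≤ u 0 * ∏ i ∈ range n, r i := by
  induction n with
  | zero => simp
  | succ n ih =>
    calc u (n + 1) ≤ r n * u n := h n
      _ ≤ r n * (u 0 * ∏ i ∈ range n, r i) := mul_le_mul_of_nonneg_left ih (hr n)
      _ = u 0 * ∏ i ∈ range (n + 1), r i := by rw [prod_range_succ]; ring

lemma tendsto_prod_range_zero_of_tendsto_average_log {r : ℕ → ℝ} (hr : ∀ n, 0 < r n) {m : ℝ}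
    (hm : m < 0) (h : Tendsto (fun n : ℕ => (∑ i ∈ range n, log (r i)) / n) atTop (𝓝 m)) :
    Tendsto (fun n => ∏ i ∈ range n, r i) atTop (𝓝 0) := by
  have hsum : Tendsto (fun n : ℕ => ∑ i ∈ range n, log (r i)) atTop atBot := by
    refine (tendsto_natCast_atTop_atTop.atTop_mul_neg hm h).congr' ?_
    filter_upwards [eventually_ne_atTop 0] with n hn
    field_simp
  refine (tendsto_exp_atBot.comp hsum).congr fun n => ?_
  rw [Function.comp_apply, exp_sum]
  exact prod_congr rfl fun i _ => exp_log (hr i)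

namespace AnnealingCorrection

variable {a b β : ℝ} {ξ x : ℕ → ℝ} {l : ℕ → ℤ}

lemma abs_sub_div_succ (ha : a ≠ 0) (hβ : 0 < β)
    (hx : ∀ n, x (n + 1) = b / a + ξ n / ((2 : ℝ) ^ (l n) * √2 * a * β)) (n : ℕ) :
    |x (n + 1) - b / a| = √2 * |ξ n| / β * (2 : ℝ) ^ (-l n) / (2 * |a|) := by
  have h2 : (0 : ℝ) < 2 ^ l n := zpow_pos two_pos _
  rw [hx, add_sub_cancel_left, abs_div, abs_mul, abs_mul, abs_mul, abs_of_pos h2,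
    abs_of_pos hβ, abs_of_pos (by positivity : (0 : ℝ) < √2), zpow_neg]
  field_simp
  rw [sq_sqrt zero_le_two]

lemma abs_sub_mul_succ (ha : a ≠ 0) (hβ : 0 < β)
    (hx : ∀ n, x (n + 1) = b / a + ξ n / ((2 : ℝ) ^ (l n) * √2 * a * β)) (n : ℕ) :
    |b - a * x (n + 1)| = √2 * |ξ n| / β * (2 : ℝ) ^ (-l n) / 2 := by
  rw [show b - a * x (n + 1) = -a * (x (n + 1) - b / a) by field_simp; ring, abs_mul, abs_neg,
    abs_sub_div_succ ha hβ hx]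
  field_simp

lemma zpow_neg_succ_le (ha : a ≠ 0) (hβ : 0 < β)
    (hx : ∀ n, x (n + 1) = b / a + ξ n / ((2 : ℝ) ^ (l n) * √2 * a * β))
    (hl : ∀ n, b - a * x (n + 1) ≠ 0 →
      (2 : ℝ) ^ (l (n + 1)) * |b - a * x (n + 1)| ∈ Ioc (1 / 2 : ℝ) 1)
    {n : ℕ} (hξ : ξ n ≠ 0) :
    (2 : ℝ) ^ (-l (n + 1)) ≤ √2 * |ξ n| / β * (2 : ℝ) ^ (-l n) := by
  have hres := abs_sub_mul_succ ha hβ hx n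
  have hne : b - a * x (n + 1) ≠ 0 := by
    rw [← abs_pos, hres]
    have := abs_pos.2 hξ
    positivity
  have hhalf := (hl n hne).1
  rw [hres] at hhalf
  rw [zpow_neg, inv_le_iff_one_le_mul₀ (zpow_pos two_pos _)]
  linarith

lemma abs_sub_div_succ_le_prod (ha : a ≠ 0) (hβ : 0 < β)
    (hx : ∀ n, x (n + 1) = b / a + ξ n / ((2 : ℝ) ^ (l n) * √2 * a * β))
    (hl : ∀ n, b - a * x (n + 1) ≠ 0 →
      (2 : ℝ) ^ (l (n + 1)) * |b - a * x (n + 1)| ∈ Ioc (1 / 2 : ℝ) 1)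
    (hξ : ∀ n, ξ n ≠ 0) (n : ℕ) :
    |x (n + 1) - b / a| ≤ (2 : ℝ) ^ (-l 0) / (2 * |a|) * ∏ i ∈ range (n + 1), √2 * |ξ i| / β := by
  have hscale := le_mul_prod_range_of_succ_le (u := fun n => (2 : ℝ) ^ (-l n))
    (fun n => by positivity) (fun n => zpow_neg_succ_le ha hβ hx hl (hξ n)) n
  rw [abs_sub_div_succ ha hβ hx, prod_range_succ]
  calc √2 * |ξ n| / β * (2 : ℝ) ^ (-l n) / (2 * |a|)
      ≤ √2 * |ξ n| / β * ((2 : ℝ) ^ (-l 0) * ∏ i ∈ range n, √2 * |ξ i| / β) / (2 * |a|) := by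
        gcongr
    _ = _ := by ring

lemma tendsto_pow_mul_sub_div (ha : a ≠ 0) (hβ : 0 < β)
    (hx : ∀ n, x (n + 1) = b / a + ξ n / ((2 : ℝ) ^ (l n) * √2 * a * β))
    (hl : ∀ n, b - a * x (n + 1) ≠ 0 →
      (2 : ℝ) ^ (l (n + 1)) * |b - a * x (n + 1)| ∈ Ioc (1 / 2 : ℝ) 1)
    (hξ : ∀ n, ξ n ≠ 0)
    (havg : Tendsto (fun n : ℕ => (∑ i ∈ range n, log (ξ i)) / n) atTop
      (𝓝 (-(eulerMascheroniConstant + log 2) / 2)))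
    {s : ℝ} (hs : 0 < s) (hsβ : s < β * exp (eulerMascheroniConstant / 2)) :
    Tendsto (fun n => s ^ n * (x n - b / a)) atTop (𝓝 0) := by
  set r : ℕ → ℝ := fun i => s * (√2 * |ξ i| / β)
  set c := log s + log 2 / 2 - log β with hc
  have hr : ∀ i, 0 < r i := fun i => by have := abs_pos.2 (hξ i); positivity
  have hlog_r : ∀ i, log (r i) = c + log (ξ i) := fun i => by
    have := abs_pos.2 (hξ i)
    simp only [r]
    rw [log_mul hs.ne' (by positivity), log_div (by positivity) hβ.ne',
      log_mul (by positivity) this.ne', log_abs, log_sqrt zero_le_two]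
    ring
  have hneg : c + -(eulerMascheroniConstant + log 2) / 2 < 0 := by
    have := log_lt_log hs hsβ
    rw [log_mul hβ.ne' (exp_pos _).ne', log_exp] at this
    linarith [hc]
  have havg_r : Tendsto (fun n : ℕ => (∑ i ∈ range n, log (r i)) / n) atTop
      (𝓝 (c + -(eulerMascheroniConstant + log 2) / 2)) := by
    refine (tendsto_const_nhds.add havg).congr' ?_
    filter_upwards [eventually_ne_atTop 0] with n hn
    simp only [hlog_r, sum_add_distrib, sum_const, card_range, nsmul_eq_mul]
    field_simp
  have hprod := ((tendsto_prod_range_zero_of_tendsto_average_log hr hneg havg_r).comp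
    (tendsto_add_atTop_nat 1)).const_mul ((2 : ℝ) ^ (-l 0) / (2 * |a|))
  rw [mul_zero] at hprod
  rw [← tendsto_add_atTop_iff_nat 1]
  refine squeeze_zero_norm (fun n => ?_) hprod
  rw [norm_mul, norm_pow, norm_of_nonneg hs.le, Real.norm_eq_abs, Function.comp_apply]
  calc s ^ (n + 1) * |x (n + 1) - b / a|
      ≤ s ^ (n + 1) * ((2 : ℝ) ^ (-l 0) / (2 * |a|) * ∏ i ∈ range (n + 1), √2 * |ξ i| / β) := by
        gcongr
        exact abs_sub_div_succ_le_prod ha hβ hx hl hξ n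
    _ = _ := by
        simp only [r, prod_mul_distrib, prod_const, card_range]
        ring

end AnnealingCorrection

theorem iterative_scheme_convergence_general
    {Ω : Type*} [MeasureSpace Ω]
    (a b β s : ℝ) (ha : a ≠ 0) (hβ : 0 < β)
    (ξ : ℕ → Ω → ℝ)
    (hindep : iIndepFun ξ ℙ)
    (hgauss : ∀ n, Measure.map (ξ n) ℙ = gaussianReal 0 1)
    (x : ℕ → Ω → ℝ) (l : ℕ → Ω → ℤ)
    (hx : ∀ n ω, x (n + 1) ω = b / a + ξ n ω / ((2 : ℝ) ^ (l n ω) * Real.sqrt 2 * a * β))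
    (hl : ∀ n ω, b - a * x (n + 1) ω ≠ 0 →
      (2 : ℝ) ^ (l (n + 1) ω) * |b - a * x (n + 1) ω| ∈ Set.Ioc (1 / 2 : ℝ) 1)
    (hs1 : 1 ≤ s) (hs2 : s < β * Real.exp (Real.eulerMascheroniConstant / 2)) :
    ∀ᵐ ω ∂ℙ, Tendsto (fun n => s ^ n * (x n ω - b / a)) atTop (nhds 0) := by
  filter_upwards [ae_all_iff.2 fun n => ae_ne_of_map_eq_gaussianReal one_ne_zero (hgauss n) 0,
    ae_tendsto_average_log_of_iIndepFun_gaussianReal hindep hgauss] with ω hξ havg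
  exact AnnealingCorrection.tendsto_pow_mul_sub_div ha hβ (hx · ω) (hl · ω) hξ havg
    (by linarith) hs2

/-- Exponential a.s. convergence of the iterated quantum-annealing correction algorithm:
if `1 ≤ s < β e^{γ/2}`, then `s^n (x_n - b/a) → 0` almost surely. -/
theorem iterative_scheme_convergence
    {Ω : Type*} [MeasureSpace Ω] [IsProbabilityMeasure (ℙ : Measure Ω)]
    (a b β s : ℝ) (ha : a ≠ 0) (hβ : 0 < β)
    (ξ : ℕ → Ω → ℝ) (hmeas : ∀ n, Measurable (ξ n))
    (hindep : iIndepFun ξ ℙ)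
    (hgauss : ∀ n, Measure.map (ξ n) ℙ = gaussianReal 0 1)
    (x : ℕ → Ω → ℝ) (l : ℕ → Ω → ℤ)
    (hx0 : ∀ ω, x 0 ω = 0) (hl0 : ∀ ω, l 0 ω = 0)
    (hx : ∀ n ω, x (n + 1) ω = b / a + ξ n ω / ((2 : ℝ) ^ (l n ω) * Real.sqrt 2 * a * β))
    (hl : ∀ n ω, b - a * x (n + 1) ω ≠ 0 →
      (2 : ℝ) ^ (l (n + 1) ω) * |b - a * x (n + 1) ω| ∈ Set.Ioc (1 / 2 : ℝ) 1)
    (hs1 : 1 ≤ s) (hs2 : s < β * Real.exp (Real.eulerMascheroniConstant / 2)) :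
    ∀ᵐ ω ∂ℙ, Tendsto (fun n => s ^ n * (x n ω - b / a)) atTop (nhds 0) :=
  iterative_scheme_convergence_general a b β s ha hβ ξ hindep hgauss x l hx hl hs1 hs2
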